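/- arXiv:2601.21351 — 2 statements merged into one kernel-verified Lean document; each statement's English description precedes it below -/
import Mathlib

section
/- Let M > β > 0, α, B > 0, and define τ(r) = max{M, αrB + β} and h(r) = rB/((r+1)τ(r)) for r > 0. Let r_crit = (M − β)/(αB) and r_peak = √(β/(αB)). Then h attains its global maximum over (0, ∞) at r* = max{r_crit, r_peak}. -/
/-!
Write `a = αB`. The throughput is the smaller of the attention-bound value `r / ((r+1) M)`,
increasing in `r`, and the FFN-bound value `g r = r / ((r+1)(a r + β))`, and the two agree at
`r_crit`. Clearing denominators, `g r ≤ g s ↔ 0 ≤ (r - s)(a r s - β)`, so `g` is unimodal with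
peak at `r_peak = √(β / a)`; hence on `[r_crit, ∞)` the maximum of `g` sits at
`max r_crit r_peak`, and below `r_crit` the throughput is at most its value at `r_crit`.
-/

open Set

noncomputable def ffnThroughput (a β r : ℝ) : ℝ := r / ((r + 1) * (a * r + β))

noncomputable def bundleThroughput (M a β r : ℝ) : ℝ := r / ((r + 1) * max M (a * r + β))

section

variable {M a β : ℝ}

lemma ffnThroughput_le_iff (ha : 0 ≤ a) (hβ : 0 < β) {r s : ℝ} (hr : 0 < r) (hs : 0 < s) :
    ffnThroughput a β r ≤ ffnThroughput a β s ↔ 0 ≤ (r - s) * (a * r * s - β) := by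
  have key : s * ((r + 1) * (a * r + β)) - r * ((s + 1) * (a * s + β)) =
      (r - s) * (a * r * s - β) := by ring
  rw [ffnThroughput, ffnThroughput, div_le_div_iff₀ (by positivity) (by positivity),
    ← sub_nonneg, key]

lemma mul_sqrt_div_sq (ha : 0 < a) (hβ : 0 ≤ β) : a * √(β / a) ^ 2 = β := by
  rw [Real.sq_sqrt (div_nonneg hβ ha.le)]
  field_simp

lemma ffnThroughput_le_at_max_sqrt (ha : 0 < a) (hβ : 0 < β) {c s : ℝ} (hc : 0 < c)
    (hcs : c ≤ s) : ffnThroughput a β s ≤ ffnThroughput a β (max c √(β / a)) := by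
  set p := √(β / a)
  have hpeak : a * p ^ 2 = β := mul_sqrt_div_sq ha hβ.le
  have hs : 0 < s := hc.trans_le hcs
  rw [ffnThroughput_le_iff ha.le hβ hs (hc.trans_le (le_max_left c p))]
  rcases le_or_gt (max c p) s with hle | hlt
  · have hp : p ≤ max c p := le_max_right c p
    have hpp : p * p ≤ s * max c p :=
      mul_le_mul (hp.trans hle) hp (Real.sqrt_nonneg _) hs.le
    have : β ≤ a * s * max c p := by nlinarith
    exact mul_nonneg (sub_nonneg.2 hle) (sub_nonneg.2 this)
  · have hcp : c < p := (lt_max_iff.1 (hcs.trans_lt hlt)).resolve_left (lt_irrefl c)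
    have hmax : max c p = p := max_eq_right hcp.le
    rw [hmax] at hlt ⊢
    have : a * s * p < β := by nlinarith [Real.sqrt_nonneg (β / a)]
    nlinarith

lemma bundleThroughput_eq_ffnThroughput {r : ℝ} (h : M ≤ a * r + β) :
    bundleThroughput M a β r = ffnThroughput a β r := by
  rw [bundleThroughput, ffnThroughput, max_eq_right h]

lemma bundleThroughput_le_ffnThroughput (ha : 0 ≤ a) (hβ : 0 < β) {r : ℝ} (hr : 0 ≤ r) :
    bundleThroughput M a β r ≤ ffnThroughput a β r :=
  div_le_div_of_nonneg_left hr (by positivity)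
    (mul_le_mul_of_nonneg_left (le_max_right _ _) (by positivity))

lemma bundleThroughput_le_attention (hM : 0 < M) {r : ℝ} (hr : 0 ≤ r) :
    bundleThroughput M a β r ≤ r / ((r + 1) * M) :=
  div_le_div_of_nonneg_left hr (by positivity)
    (mul_le_mul_of_nonneg_left (le_max_left _ _) (by positivity))

lemma div_add_one_mul_le_div_add_one_mul (hM : 0 < M) {r s : ℝ} (hr : 0 ≤ r) (hrs : r ≤ s) :
    r / ((r + 1) * M) ≤ s / ((s + 1) * M) := by
  have hs : 0 ≤ s := hr.trans hrs
  rw [div_le_div_iff₀ (by positivity) (by positivity)]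
  nlinarith

lemma bundleThroughput_le_at_max (ha : 0 < a) (hβ : 0 < β) (hβM : β < M) {r : ℝ}
    (hr : 0 < r) :
    bundleThroughput M a β r ≤ ffnThroughput a β (max ((M - β) / a) √(β / a)) := by
  set c := (M - β) / a
  have hc : 0 < c := div_pos (sub_pos.2 hβM) ha
  have hcrit : a * c + β = M := by simp only [c]; field_simp; ring
  rcases le_total c r with hcr | hrc
  · exact (bundleThroughput_le_ffnThroughput ha.le hβ hr.le).trans
      (ffnThroughput_le_at_max_sqrt ha hβ hc hcr)
  · calc bundleThroughput M a β r ≤ r / ((r + 1) * M) :=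
          bundleThroughput_le_attention (hβ.trans hβM) hr.le
      _ ≤ c / ((c + 1) * M) := div_add_one_mul_le_div_add_one_mul (hβ.trans hβM) hr.le hrc
      _ = ffnThroughput a β c := by rw [ffnThroughput, hcrit]
      _ ≤ ffnThroughput a β (max c √(β / a)) :=
          ffnThroughput_le_at_max_sqrt ha hβ hc le_rfl

end

theorem optimal_af_ratio (M α B β : ℝ) (hβ : 0 < β) (hMβ : β < M)
    (hα : 0 < α) (hB : 0 < B) :
    let h : ℝ → ℝ := fun r => r * B / ((r + 1) * max M (α * r * B + β))
    let rcrit : ℝ := (M - β) / (α * B)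
    let rpeak : ℝ := Real.sqrt (β / (α * B))
    max rcrit rpeak ∈ Set.Ioi (0 : ℝ) ∧
      IsMaxOn h (Set.Ioi (0 : ℝ)) (max rcrit rpeak) := by
  intro h rcrit rpeak
  have ha : 0 < α * B := mul_pos hα hB
  have hcrit : 0 < rcrit := div_pos (sub_pos.2 hMβ) ha
  have h_eq (r : ℝ) : h r = B * bundleThroughput M (α * B) β r := by
    simp only [h, bundleThroughput]
    ring_nf
  have hffn : M ≤ α * B * max rcrit rpeak + β := by
    have : α * B * rcrit + β = M := by simp only [rcrit]; field_simp; ring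
    nlinarith [le_max_left rcrit rpeak]
  refine ⟨hcrit.trans_le (le_max_left _ _), fun r (hr : 0 < r) => ?_⟩
  change h r ≤ h (max rcrit rpeak)
  rw [h_eq, h_eq, bundleThroughput_eq_ffnThroughput hffn]
  exact mul_le_mul_of_nonneg_left (bundleThroughput_le_at_max ha hβ hMβ hr) hB.le
end

section
/- With M > β > 0, α, B > 0, r_crit = (M−β)/(αB), r_peak = √(β/(αB)), and h(r) = rB/((r+1)·max{M, αrB+β}): if r_crit ≥ r_peak then the optimal throughput is h(r_crit) = r_crit B / ((r_crit+1) M), i.e., the optimum occurs exactly where FFN latency balances the dominant non-FFN latency. -/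
/-!
While the FFN is faster than the dominant latency `M` (i.e. `r ≤ r_crit`), the denominator is
pinned at `M` and `r / (r + 1)` grows with `r`. Past `r_crit` the FFN latency dominates, and
`(r + 1)(α r B + β) / r = α B r + β / r + α B + β` is increasing beyond `r_peak`, where
`α B r + β / r` has its minimum. Both regimes are therefore maximised at `r_crit`.
-/

open Set

lemma div_mul_max_le_of_le {M B r c : ℝ} (x : ℝ) (hM : 0 < M) (hB : 0 ≤ B) (hr : 0 ≤ r)
    (hrc : r ≤ c) : r * B / ((r + 1) * max M x) ≤ c * B / ((c + 1) * M) :=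
  calc r * B / ((r + 1) * max M x) ≤ r * B / ((r + 1) * M) := by
        gcongr
        exact le_max_left M x
    _ ≤ c * B / ((c + 1) * M) := by
        have hc : 0 ≤ c := hr.trans hrc
        rw [div_le_div_iff₀ (by positivity) (by positivity)]
        nlinarith [mul_nonneg (mul_nonneg hB hM.le) (sub_nonneg.2 hrc)]

lemma antitoneOn_div_mul_affine {α B β : ℝ} (hα : 0 < α) (hB : 0 < B) (hβ : 0 < β) :
    AntitoneOn (fun r => r * B / ((r + 1) * (α * r * B + β))) (Ici √(β / (α * B))) := by
  intro s hs r hr hsr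
  have hs0 : 0 ≤ s := (Real.sqrt_nonneg _).trans hs
  have hr0 : 0 ≤ r := hs0.trans hsr
  have hpeak : β ≤ α * B * (s * s) := by
    rw [← div_le_iff₀' (mul_pos hα hB), ← sq]
    exact (Real.sqrt_le_left hs0).1 hs
  have hαBrs : β ≤ α * B * (r * s) := hpeak.trans (by gcongr)
  dsimp only
  rw [div_le_div_iff₀ (by positivity) (by positivity)]
  -- the difference of the two sides is `B (r - s) (α B r s - β)`
  nlinarith [mul_nonneg (mul_nonneg hB.le (sub_nonneg.2 hsr)) (sub_nonneg.2 hαBrs)]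

theorem optimal_at_balance_point (M α B β : ℝ) (hβ : 0 < β) (hMβ : β < M)
    (hα : 0 < α) (hB : 0 < B)
    (hge : Real.sqrt (β / (α * B)) ≤ (M - β) / (α * B)) :
    let h : ℝ → ℝ := fun r => r * B / ((r + 1) * max M (α * r * B + β))
    let rcrit : ℝ := (M - β) / (α * B)
    h rcrit = rcrit * B / ((rcrit + 1) * M) ∧
      ∀ r ∈ Set.Ioi (0 : ℝ), h r ≤ h rcrit := by
  intro h rcrit
  have hbalance : α * rcrit * B + β = M := by
    simp only [rcrit]
    field_simp
    ring
  have hcrit : h rcrit = rcrit * B / ((rcrit + 1) * M) := by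
    simp only [h, hbalance, max_self]
  refine ⟨hcrit, fun r (hr : 0 < r) => ?_⟩
  rcases le_total r rcrit with hle | hle
  · rw [hcrit]
    exact div_mul_max_le_of_le _ (hβ.trans hMβ) hB.le hr.le hle
  · have hffn : M ≤ α * r * B + β := hbalance ▸ by gcongr
    have hpeak : rcrit ∈ Ici √(β / (α * B)) := hge
    calc h r = r * B / ((r + 1) * (α * r * B + β)) := by simp only [h, max_eq_right hffn]
      _ ≤ rcrit * B / ((rcrit + 1) * (α * rcrit * B + β)) :=
        antitoneOn_div_mul_affine hα hB hβ hpeak (mem_Ici.2 (hpeak.trans hle)) hle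
      _ = h rcrit := by simp only [h, hbalance, max_self]
end
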